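/- Assume either (i) a* > 0 and β ≥ β_max, or (ii) a* = 0. Then the unique minimizer of g over D is (0, ĉ), where ĉ ∈ (max(β,a*), ∞) is the unique minimizer of g₀ on (β,∞); in particular, the optimal lower barrier is c₁* = 0. -/

import Mathlib

/-!
With `m := H' ĉ`, the function `ψ x = H x - m * x` strictly decreases on `[0, ĉ]` and strictly
increases on `[ĉ, ∞)`, and the tangency condition `H ĉ - H 0 = m * (ĉ - β)` reads
`ψ ĉ - ψ 0 = -m * β`. Hence on `D`,
`H c₂ - H c₁ - m * (c₂ - c₁ - β) = (ψ c₂ - ψ c₁) - (ψ ĉ - ψ 0) ≥ 0`, with equality only at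
`(0, ĉ)`: `m` is the minimum of `g`, attained only there, and `g₀ = g (0, ·)` is minimised only at
`ĉ`.

The point `ĉ` is a zero of `H' x * (x - β) - (H x - H 0)`, found by the intermediate value
theorem to the right of a point `x₁ > a*` where this is `≤ 0` and `H' x₁` exceeds `H'` on
`(0, a*]`: `x₁ = β` if `a* = 0`, and `x₁ = max β z₀` otherwise, where `β ≥ β_max` is exactly
the sign condition at `z₀`. Since `H' → ∞`, the expression becomes nonnegative far out.
-/

open Set Filter Topology

theorem StrictAntiOn.Icc_of_Ioo {f : ℝ → ℝ} {a b : ℝ} (hf : StrictAntiOn f (Ioo a b))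
    (hcont : ContinuousOn f (Icc a b)) : StrictAntiOn f (Icc a b) := by
  intro x hx y hy hxy
  have hab : a < b := hx.1.trans_lt (hxy.trans_le hy.2)
  have hcluster : ∀ p ∈ Icc a b, ClusterPt p (𝓟 (Ioo a b)) := fun p hp =>
    mem_closure_iff_clusterPt.mp (by rwa [closure_Ioo hab.ne])
  have hmono : MonotoneOn (fun x => -f x) (Icc a b) := by
    have hIco : MonotoneOn (fun x => -f x) (Ico a b) := by
      rw [← Ioo_insert_left hab]
      exact hf.neg.monotoneOn.insert_of_continuousWithinAt (hcluster a (left_mem_Icc.2 hab.le))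
        ((hcont.neg a (left_mem_Icc.2 hab.le)).mono Ioo_subset_Icc_self)
    rw [← Ico_insert_right hab.le]
    exact hIco.insert_of_continuousWithinAt
      ((hcluster b (right_mem_Icc.2 hab.le)).mono (principal_mono.2 Ioo_subset_Ico_self))
      ((hcont.neg b (right_mem_Icc.2 hab.le)).mono Ico_subset_Icc_self)
  have hu : (2 * x + y) / 3 ∈ Ioo a b := ⟨by linarith [hx.1], by linarith [hy.2]⟩
  have hv : (x + 2 * y) / 3 ∈ Ioo a b := ⟨by linarith [hx.1], by linarith [hy.2]⟩
  have h₁ := hmono hx (Ioo_subset_Icc_self hu) (by linarith)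
  have h₂ := hf hu hv (by linarith)
  have h₃ := hmono (Ioo_subset_Icc_self hv) hy (by linarith)
  simp only [neg_le_neg_iff] at h₁ h₃
  linarith

section SupportLine

variable {H H' : ℝ → ℝ} {m : ℝ}

theorem strictMonoOn_sub_mul_Ici {a : ℝ} (hH : ContinuousOn H (Ici a))
    (hderiv : ∀ x ∈ Ioi a, HasDerivAt H (H' x) x) (hgt : ∀ x ∈ Ioi a, m < H' x) :
    StrictMonoOn (fun x => H x - m * x) (Ici a) := by
  refine strictMonoOn_of_hasDerivWithinAt_pos (f' := fun x => H' x - m * 1) (convex_Ici a)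
    (hH.sub (continuousOn_const.mul continuousOn_id)) (fun x hx => ?_) (fun x hx => ?_)
  all_goals rw [interior_Ici] at hx
  · exact ((hderiv x hx).sub ((hasDerivAt_id x).const_mul m)).hasDerivWithinAt
  · linarith [hgt x hx]

theorem strictAntiOn_sub_mul_Icc {a b : ℝ} (hH : ContinuousOn H (Icc a b))
    (hderiv : ∀ x ∈ Ioo a b, HasDerivAt H (H' x) x) (hlt : ∀ x ∈ Ioo a b, H' x < m) :
    StrictAntiOn (fun x => H x - m * x) (Icc a b) := by
  refine strictAntiOn_of_hasDerivWithinAt_neg (f' := fun x => H' x - m * 1) (convex_Icc a b)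
    (hH.sub (continuousOn_const.mul continuousOn_id)) (fun x hx => ?_) (fun x hx => ?_)
  all_goals rw [interior_Icc] at hx
  · exact ((hderiv x hx).sub ((hasDerivAt_id x).const_mul m)).hasDerivWithinAt
  · linarith [hlt x hx]

end SupportLine

theorem lt_of_valley {ψ : ℝ → ℝ} {c d : ℝ} (hanti : StrictAntiOn ψ (Icc 0 c))
    (hmono : StrictMonoOn ψ (Ici c)) (hd : 0 ≤ d) (hne : d ≠ c) : ψ c < ψ d := by
  rcases hne.lt_or_gt with h | h
  · exact hanti ⟨hd, h.le⟩ ⟨hd.trans h.le, le_rfl⟩ h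
  · exact hmono self_mem_Ici h.le h

theorem sub_lt_sub_of_valley {ψ : ℝ → ℝ} {c d₁ d₂ : ℝ} (hc : 0 < c)
    (hanti : StrictAntiOn ψ (Icc 0 c)) (hmono : StrictMonoOn ψ (Ici c)) (h₁ : 0 ≤ d₁)
    (h₁₂ : d₁ ≤ d₂) (hne : d₁ ≠ 0 ∨ d₂ ≠ c) : ψ c - ψ 0 < ψ d₂ - ψ d₁ := by
  rcases le_or_gt d₁ c with hd₁c | hcd₁
  · have hleft : ψ d₁ ≤ ψ 0 := hanti.antitoneOn ⟨le_rfl, hc.le⟩ ⟨h₁, hd₁c⟩ h₁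
    have hright : ψ c ≤ ψ d₂ := by
      rcases eq_or_ne d₂ c with rfl | h
      · exact le_rfl
      · exact (lt_of_valley hanti hmono (h₁.trans h₁₂) h).le
    rcases hne with hne | hne
    · have := hanti ⟨le_rfl, hc.le⟩ ⟨h₁, hd₁c⟩ (h₁.lt_of_ne' hne)
      linarith
    · have := lt_of_valley hanti hmono (h₁.trans h₁₂) hne
      linarith
  · have hdown : ψ c < ψ 0 := hanti ⟨le_rfl, hc.le⟩ ⟨hc.le, le_rfl⟩ hc
    have hup : ψ d₁ ≤ ψ d₂ := hmono.monotoneOn hcd₁.le (hcd₁.le.trans h₁₂) h₁₂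
    linarith

theorem lt_div_of_valley {H : ℝ → ℝ} {m c β d₁ d₂ : ℝ} (hc : 0 < c)
    (hanti : StrictAntiOn (fun x => H x - m * x) (Icc 0 c))
    (hmono : StrictMonoOn (fun x => H x - m * x) (Ici c)) (htangent : H c - H 0 = m * (c - β))
    (hβ : 0 ≤ β) (h₁ : 0 ≤ d₁) (h₁₂ : d₁ + β < d₂) (hne : d₁ ≠ 0 ∨ d₂ ≠ c) :
    m < (H d₂ - H d₁) / (d₂ - d₁ - β) := by
  rw [lt_div_iff₀ (by linarith)]
  have := sub_lt_sub_of_valley hc hanti hmono h₁ (by linarith) hne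
  linarith

theorem le_div_of_valley {H : ℝ → ℝ} {m c β d₁ d₂ : ℝ} (hc : 0 < c)
    (hanti : StrictAntiOn (fun x => H x - m * x) (Icc 0 c))
    (hmono : StrictMonoOn (fun x => H x - m * x) (Ici c)) (htangent : H c - H 0 = m * (c - β))
    (hβ : 0 ≤ β) (h₁ : 0 ≤ d₁) (h₁₂ : d₁ + β < d₂) :
    m ≤ (H d₂ - H d₁) / (d₂ - d₁ - β) := by
  by_cases hne : d₁ ≠ 0 ∨ d₂ ≠ c
  · exact (lt_div_of_valley hc hanti hmono htangent hβ h₁ h₁₂ hne).le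
  · obtain ⟨rfl, rfl⟩ : d₁ = 0 ∧ d₂ = c := by tauto
    rw [htangent, sub_zero, mul_div_cancel_right₀ _ (by linarith)]

theorem exists_sub_le_mul_of_tendsto_atTop {H H' : ℝ → ℝ} {a β : ℝ} (hβa : β + 1 ≤ a)
    (hH : ContinuousOn H (Ici a)) (hderiv : ∀ x ∈ Ioi a, HasDerivAt H (H' x) x)
    (hmono : MonotoneOn H' (Ioi a)) (htop : Tendsto H' atTop atTop) :
    ∃ y, a < y ∧ H y - H 0 ≤ H' y * (y - β) := by
  obtain ⟨y, hHy, hy⟩ : ∃ y, max (H a - H 0) 0 ≤ H' y ∧ a + 1 ≤ y :=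
    ((htop.eventually_ge_atTop _).and (eventually_ge_atTop _)).exists
  have hay : a < y := by linarith
  obtain ⟨ξ, hξ, hslope⟩ := exists_hasDerivAt_eq_slope H H' hay (hH.mono Icc_subset_Ici_self)
    (fun x hx => hderiv x hx.1)
  have hmvt : H y - H a ≤ H' y * (y - a) := by
    rw [← div_le_iff₀ (by linarith), ← hslope]
    exact hmono hξ.1 (hξ.1.trans hξ.2) hξ.2.le
  refine ⟨y, hay, ?_⟩
  nlinarith [le_max_left (H a - H 0) 0, le_max_right (H a - H 0) 0]

theorem exists_tangent_point {H H' : ℝ → ℝ} {β astar x₁ : ℝ} (hHcont : ContinuousOn H (Ici 0))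
    (hHderiv : ∀ x ∈ Ioi 0, HasDerivAt H (H' x) x) (hHmono : StrictMonoOn H (Ici 0))
    (hH'cont : ContinuousOn H' (Ici 0)) (hH'top : Tendsto H' atTop atTop)
    (hH'inc : StrictMonoOn H' (Ioi astar)) (hβ : 0 < β) (hβx₁ : β ≤ x₁) (hax₁ : astar < x₁)
    (hgap : H' x₁ * (x₁ - β) ≤ H x₁ - H 0) (hrecord : ∀ x ∈ Ioc 0 astar, H' x < H' x₁) :
    ∃ c, max β astar < c ∧ H c - H 0 = H' c * (c - β) ∧ ∀ x ∈ Ioo 0 c, H' x < H' c := by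
  have hx₁ : 0 < x₁ := hβ.trans_le hβx₁
  obtain ⟨y, hy, hgap_y⟩ := exists_sub_le_mul_of_tendsto_atTop (a := x₁ + 1) (β := β) (by linarith)
    (hHcont.mono (Ici_subset_Ici.2 (by linarith)))
    (fun x hx => hHderiv x (show (0 : ℝ) < x by linarith [mem_Ioi.1 hx]))
    (hH'inc.monotoneOn.mono (Ioi_subset_Ioi (by linarith))) hH'top
  have hsub : Icc x₁ y ⊆ Ici 0 := fun t ht => hx₁.le.trans ht.1
  have hcont : ContinuousOn (fun x => H' x * (x - β) - (H x - H 0)) (Icc x₁ y) :=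
    ((hH'cont.mono hsub).mul (continuousOn_id.sub continuousOn_const)).sub
      ((hHcont.mono hsub).sub continuousOn_const)
  obtain ⟨c, hc, hroot⟩ := intermediate_value_Icc (by linarith) hcont
    (show (0 : ℝ) ∈ Icc _ _ from ⟨by linarith, by linarith⟩)
  have hβc : β < c := by
    refine (hβx₁.trans hc.1).lt_of_ne fun hcβ => ?_
    subst hcβ
    have := hHmono self_mem_Ici (mem_Ici.2 hβ.le) hβ
    simp only [sub_self, mul_zero, zero_sub, neg_eq_zero] at hroot
    linarith
  refine ⟨c, max_lt hβc (hax₁.trans_le hc.1), by linarith [hroot], fun x hx => ?_⟩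
  rcases le_or_gt x astar with hxa | hxa
  · exact (hrecord x ⟨hx.1, hxa⟩).trans_le
      (hH'inc.monotoneOn hax₁ (hax₁.trans_le hc.1) hc.1)
  · exact hH'inc hxa (hxa.trans hx.2) hx.2

theorem exists_ivt_left_endpoint {H H' : ℝ → ℝ} {β astar z₀ βmax : ℝ}
    (hHmono : MonotoneOn H (Ici 0)) (hH'pos : ∀ x ∈ Ioi (0 : ℝ), 0 < H' x)
    (hH'cont : ContinuousOn H' (Ici 0))
    (hH'dec : StrictAntiOn H' (Ioo 0 astar)) (hH'inc : StrictMonoOn H' (Ioi astar))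
    (hβ : 0 < β) (hz₀ : 0 < astar → z₀ ∈ Ioi astar ∧ H' z₀ = H' 0)
    (hβmax : βmax = z₀ - (H z₀ - H 0) / H' 0) (hcase : (0 < astar ∧ βmax ≤ β) ∨ astar = 0) :
    ∃ x₁, β ≤ x₁ ∧ astar < x₁ ∧ H' x₁ * (x₁ - β) ≤ H x₁ - H 0 ∧
      ∀ x ∈ Ioc 0 astar, H' x < H' x₁ := by
  have hgapβ : H' β * (β - β) ≤ H β - H 0 := by
    simpa using hHmono self_mem_Ici (mem_Ici.2 hβ.le) hβ.le
  rcases hcase with ⟨ha, hβmax_le⟩ | rfl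
  · obtain ⟨hz₀a, hz₀eq⟩ := hz₀ ha
    have hbelow : ∀ x ∈ Ioc 0 astar, H' x < H' z₀ := fun x hx =>
      hz₀eq ▸ hH'dec.Icc_of_Ioo (hH'cont.mono Icc_subset_Ici_self) ⟨le_rfl, ha.le⟩
        (Ioc_subset_Icc_self hx) hx.1
    rcases le_total z₀ β with hzβ | hβz
    · exact ⟨β, le_rfl, hz₀a.trans_le hzβ, hgapβ, fun x hx =>
        (hbelow x hx).trans_le (hH'inc.monotoneOn hz₀a (hz₀a.trans_le hzβ) hzβ)⟩
    · refine ⟨z₀, hβz, hz₀a, ?_, hbelow⟩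
      have hpos : 0 < H' 0 := hz₀eq ▸ hH'pos z₀ (ha.trans hz₀a)
      rw [hβmax, sub_le_comm, le_div_iff₀ hpos] at hβmax_le
      rw [hz₀eq]
      linarith
  · exact ⟨β, le_rfl, hβ, hgapβ, fun x hx => absurd (hx.1.trans_le hx.2) (lt_irrefl 0)⟩

theorem stmt_14_general
    (H H' : ℝ → ℝ)
    (hHcont : ContinuousOn H (Set.Ici 0))
    (hHderiv : ∀ x ∈ Set.Ioi (0:ℝ), HasDerivAt H (H' x) x)
    (hH'pos : ∀ x ∈ Set.Ioi (0:ℝ), 0 < H' x)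
    (hH'cont : ContinuousOn H' (Set.Ici 0))
    (hH'top : Filter.Tendsto H' Filter.atTop Filter.atTop)
    (β : ℝ) (hβ : 0 < β)
    (astar : ℝ)
    (hH'dec : StrictAntiOn H' (Set.Ioo 0 astar))
    (hH'inc : StrictMonoOn H' (Set.Ioi astar))
    (g₀ : ℝ → ℝ) (hg₀ : ∀ x, g₀ x = (H x - H 0) / (x - β))
    (z₀ βmax : ℝ) (hz₀ : 0 < astar → z₀ ∈ Set.Ioi astar ∧ H' z₀ = H' 0)
    (hβmax : βmax = z₀ - (H z₀ - H 0) / H' 0)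
    (hcase : (0 < astar ∧ βmax ≤ β) ∨ astar = 0)
    :
    ∃ chat : ℝ, max β astar < chat ∧
      (∀ x : ℝ, β < x → x ≠ chat → g₀ chat < g₀ x) ∧
      (0 ≤ (0:ℝ) ∧ 0 + β < chat) ∧
      (∀ d₁ d₂ : ℝ, 0 ≤ d₁ → d₁ + β < d₂ →
        (H chat - H 0) / (chat - 0 - β) ≤ (H d₂ - H d₁) / (d₂ - d₁ - β)) ∧
      (∀ c₁ c₂ : ℝ, 0 ≤ c₁ → c₁ + β < c₂ →
        (∀ d₁ d₂ : ℝ, 0 ≤ d₁ → d₁ + β < d₂ →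
          (H c₂ - H c₁) / (c₂ - c₁ - β) ≤ (H d₂ - H d₁) / (d₂ - d₁ - β)) →
        c₁ = 0 ∧ c₂ = chat) := by
  have hHmono : StrictMonoOn H (Ici 0) := by
    simpa using strictMonoOn_sub_mul_Ici (m := 0) hHcont hHderiv hH'pos
  obtain ⟨x₁, hβx₁, hax₁, hgap, hrecord⟩ := exists_ivt_left_endpoint hHmono.monotoneOn hH'pos
    hH'cont hH'dec hH'inc hβ hz₀ hβmax hcase
  obtain ⟨c, hc, htangent, hbelow⟩ := exists_tangent_point hHcont hHderiv hHmono hH'cont hH'top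
    hH'inc hβ hβx₁ hax₁ hgap hrecord
  have hβc : β < c := (le_max_left _ _).trans_lt hc
  have hc₀ : 0 < c := hβ.trans hβc
  have hanti := strictAntiOn_sub_mul_Icc (hHcont.mono Icc_subset_Ici_self)
    (fun x hx => hHderiv x hx.1) hbelow
  have hac : astar < c := (le_max_right _ _).trans_lt hc
  have hmono := strictMonoOn_sub_mul_Ici (hHcont.mono (Ici_subset_Ici.2 hc₀.le))
    (fun x hx => hHderiv x (hc₀.trans hx)) (fun x hx => hH'inc hac (hac.trans hx) hx)
  have hslope : (H c - H 0) / (c - 0 - β) = H' c := by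
    rw [sub_zero, htangent, mul_div_cancel_right₀ _ (by linarith)]
  refine ⟨c, hc, fun x _ hxc => ?_, ⟨le_rfl, by linarith⟩, fun d₁ d₂ h₁ h₂ => ?_,
    fun c₁ c₂ h₁ h₂ hmin => ?_⟩
  · have := lt_div_of_valley hc₀ hanti hmono htangent hβ.le le_rfl (by linarith) (Or.inr hxc)
    rw [sub_zero] at this hslope
    rwa [hg₀, hg₀, hslope]
  · rw [hslope]
    exact le_div_of_valley hc₀ hanti hmono htangent hβ.le h₁ h₂
  · by_contra hne
    have := lt_div_of_valley hc₀ hanti hmono htangent hβ.le h₁ h₂ (not_and_or.1 hne)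
    have := hmin 0 c le_rfl (by linarith)
    rw [hslope] at this
    linarith

theorem stmt_14
    (H H' : ℝ → ℝ)
    (hHcont : ContinuousOn H (Set.Ici 0))
    (hHderiv : ∀ x ∈ Set.Ioi (0:ℝ), HasDerivAt H (H' x) x)
    (hH'pos : ∀ x ∈ Set.Ioi (0:ℝ), 0 < H' x)
    (hH'cont : ContinuousOn H' (Set.Ici 0))
    (hH'top : Filter.Tendsto H' Filter.atTop Filter.atTop)
    (β : ℝ) (hβ : 0 < β)
    (astar : ℝ) (hastar : 0 ≤ astar)
    (hH'dec : StrictAntiOn H' (Set.Ioo 0 astar))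
    (hH'inc : StrictMonoOn H' (Set.Ioi astar))
    (hH'conv : ConvexOn ℝ (Set.Ioi 0) H')
    (g₀ : ℝ → ℝ) (hg₀ : ∀ x, g₀ x = (H x - H 0) / (x - β))
    (z₀ βmax : ℝ) (hz₀ : 0 < astar → z₀ ∈ Set.Ioi astar ∧ H' z₀ = H' 0)
    (hβmax : βmax = z₀ - (H z₀ - H 0) / H' 0)
    (hcase : (0 < astar ∧ βmax ≤ β) ∨ astar = 0)
    :
    ∃ chat : ℝ, max β astar < chat ∧
      (∀ x : ℝ, β < x → x ≠ chat → g₀ chat < g₀ x) ∧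
      (0 ≤ (0:ℝ) ∧ 0 + β < chat) ∧
      (∀ d₁ d₂ : ℝ, 0 ≤ d₁ → d₁ + β < d₂ →
        (H chat - H 0) / (chat - 0 - β) ≤ (H d₂ - H d₁) / (d₂ - d₁ - β)) ∧
      (∀ c₁ c₂ : ℝ, 0 ≤ c₁ → c₁ + β < c₂ →
        (∀ d₁ d₂ : ℝ, 0 ≤ d₁ → d₁ + β < d₂ →
          (H c₂ - H c₁) / (c₂ - c₁ - β) ≤ (H d₂ - H d₁) / (d₂ - d₁ - β)) →
        c₁ = 0 ∧ c₂ = chat) :=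
  stmt_14_general H H' hHcont hHderiv hH'pos hH'cont hH'top β hβ astar hH'dec hH'inc g₀ hg₀ z₀ βmax
    hz₀ hβmax hcase
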